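/- Let 1 ≤ p < ∞, let X₁, …, Xₙ, Y be real Banach spaces, and let T : X₁ × ⋯ × Xₙ → Y be a continuous n-linear operator which is Lipschitz p-summing with constant c. Then there exist a Borel probability measure μ on the closed unit ball B of continuous n-linear forms on X₁ × ⋯ × Xₙ (with the topology of pointwise convergence) and a map h̃ : L_p(μ) → ℓ∞(B_{Y*}) (the space of bounded real-valued functions on the closed unit ball of the dual Y*, with the supremum norm) that is Lipschitz with constant c, such that for every u = (x₁, …, xₙ) ∈ X₁ × ⋯ × Xₙ, h̃(g(u)) is the function y* ↦ y*(T(u)), where g(u) ∈ L_p(μ) denotes the equivalence class of the continuous function φ ↦ φ(u) on B. -/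

import Mathlib

open scoped BigOperators ENNReal
open MeasureTheory

/-- `T` is Lipschitz `p`-summing with constant `c`. -/
def LipschitzPSumming {n : ℕ} {X : Fin n → Type*} [∀ i, NormedAddCommGroup (X i)]
    [∀ i, NormedSpace ℝ (X i)] {Y : Type*} [NormedAddCommGroup Y] [NormedSpace ℝ Y]
    (p c : ℝ) (T : ContinuousMultilinearMap ℝ X Y) : Prop :=
  ∀ (k : ℕ) (u v : Fin k → ((i : Fin n) → X i)),
    (∑ i, ‖T (u i) - T (v i)‖ ^ p) ^ (1 / p) ≤
      c * ⨆ φ : {φ : ContinuousMultilinearMap ℝ X ℝ // ‖φ‖ ≤ 1},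
        (∑ i, |φ.1 (u i) - φ.1 (v i)| ^ p) ^ (1 / p)

/-- The closed unit ball of continuous `n`-linear forms on `X₁ × ⋯ × Xₙ`. -/
def FormBall {n : ℕ} (X : Fin n → Type*) [∀ i, NormedAddCommGroup (X i)]
    [∀ i, NormedSpace ℝ (X i)] : Type _ :=
  {φ : ContinuousMultilinearMap ℝ X ℝ // ‖φ‖ ≤ 1}

/-- The topology of pointwise convergence (weak-* topology) on the unit ball of
continuous `n`-linear forms. -/
instance FormBall.topologicalSpace {n : ℕ} (X : Fin n → Type*)
    [∀ i, NormedAddCommGroup (X i)] [∀ i, NormedSpace ℝ (X i)] :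
    TopologicalSpace (FormBall X) :=
  TopologicalSpace.induced
    (fun (φ : FormBall X) (x : (i : Fin n) → X i) => φ.1 x) Pi.topologicalSpace

/-- The Borel σ-algebra of the topology of pointwise convergence. -/
instance FormBall.measurableSpace {n : ℕ} (X : Fin n → Type*)
    [∀ i, NormedAddCommGroup (X i)] [∀ i, NormedSpace ℝ (X i)] :
    MeasurableSpace (FormBall X) :=
  borel (FormBall X)

/-- The closed unit ball of the dual of `Y`. -/
def DualBall (Y : Type*) [NormedAddCommGroup Y] [NormedSpace ℝ Y] : Type _ :=
  {f : Y →L[ℝ] ℝ // ‖f‖ ≤ 1}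

/-!
Pietsch's domination argument. Rescaling one coordinate turns the Lipschitz `p`-summing inequality
into its weighted form, which says that no convex combination of the continuous functions
`φ ↦ c ^ p * |φ u - φ v| ^ p - ‖T u - T v‖ ^ p` on the compact ball of forms is negative
everywhere. Separating their convex hull from the open cone of negative functions (Hahn–Banach)
gives a positive normalized functional, hence (Riesz–Markov–Kakutani) a probability measure `μ`
with `‖T u - T v‖ ≤ c * ‖g u - g v‖` in `L_p(μ)`. So `g u ↦ (y* ↦ y* (T u))` is well defined and
`c`-Lipschitz on the range of `g`, and McShane's extension, coordinate by coordinate, extends it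
to all of `L_p(μ)` with values in `ℓ∞(B_{Y*})`.
-/

open Set Topology

section Domination

variable {B : Type*} [TopologicalSpace B]

lemma ContinuousMap.convex_setOf_forall_neg : Convex ℝ {g : C(B, ℝ) | ∀ x, g x < 0} :=
  fun g hg h hh a b ha hb hab x => by
    simp only [ContinuousMap.add_apply, ContinuousMap.smul_apply, smul_eq_mul]
    rcases ha.eq_or_lt with rfl | ha
    · simp only [zero_add] at hab
      simpa [hab] using hh x
    · nlinarith [hg x, hh x]

lemma ContinuousMap.nonneg_apply_of_forall_neg_apply_nonpos (f : C(B, ℝ) →L[ℝ] ℝ)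
    (hf : ∀ g : C(B, ℝ), (∀ x, g x < 0) → f g ≤ 0) {g : C(B, ℝ)} (hg : 0 ≤ g) : 0 ≤ f g :=
  le_of_forall_pos_lt_add fun δ hδ => by
    obtain ⟨ε, hε, hεδ⟩ := exists_pos_mul_lt hδ (f 1)
    have := hf (-(g + ε • 1)) fun x => by
      have : 0 ≤ g x := ContinuousMap.le_def.1 hg x
      simp only [ContinuousMap.neg_apply, ContinuousMap.add_apply, ContinuousMap.smul_apply,
        ContinuousMap.one_apply, smul_eq_mul, mul_one]
      linarith
    simp only [map_neg, map_add, map_smul, smul_eq_mul, neg_nonpos] at this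
    linarith

variable [CompactSpace B]

lemma ContinuousMap.isOpen_setOf_forall_neg : IsOpen {g : C(B, ℝ) | ∀ x, g x < 0} := by
  simpa [Set.MapsTo] using
    ContinuousMap.isOpen_setOfPred_mapsTo isCompact_univ (isOpen_Iio (a := (0 : ℝ)))

theorem ContinuousMap.exists_positiveLinearMap_of_forall_exists_nonneg {S : Set C(B, ℝ)}
    (hS₀ : S.Nonempty) (hS : ∀ h ∈ convexHull ℝ S, ∃ x, 0 ≤ h x) :
    ∃ Λ : C(B, ℝ) →ₚ[ℝ] ℝ, Λ 1 = 1 ∧ ∀ g ∈ S, 0 ≤ Λ g := by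
  obtain ⟨f, u, hneg, hu⟩ := geometric_hahn_banach_open convex_setOf_forall_neg
    isOpen_setOf_forall_neg (convex_convexHull ℝ S)
    (Set.disjoint_left.2 fun g hg hgS => by
      obtain ⟨x, hx⟩ := hS g hgS
      exact (hg x).not_ge hx)
  -- `f < u` on a cone forces `f ≤ 0` on it.
  have hcone : ∀ g : C(B, ℝ), (∀ x, g x < 0) → f g ≤ 0 := by
    intro g hg
    by_contra! hpos
    have ht : 0 < (|u| + 1) / f g := by positivity
    have := hneg (((|u| + 1) / f g) • g) fun x => by
      simpa using mul_neg_of_pos_of_neg ht (hg x)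
    rw [map_smul, smul_eq_mul, div_mul_cancel₀ _ hpos.ne'] at this
    linarith [le_abs_self u]
  have hpos : ∀ g, 0 ≤ g → 0 ≤ f g := fun g => nonneg_apply_of_forall_neg_apply_nonpos f hcone
  have hu0 : 0 ≤ u := le_of_forall_pos_lt_add fun δ hδ => by
    obtain ⟨ε, hε, hεδ⟩ := exists_pos_mul_lt hδ (f 1)
    have := hneg (-(ε • 1)) fun x => by simpa using hε
    simp only [map_neg, map_smul, smul_eq_mul] at this
    linarith
  have hf1 : 0 < f 1 := by
    obtain ⟨g₀, hg₀⟩ := hS₀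
    have hle : f g₀ ≤ ‖g₀‖ * f 1 := by
      have := hpos (‖g₀‖ • 1 - g₀) <| ContinuousMap.le_def.2 fun x => by
        simpa using (le_abs_self (g₀ x)).trans (g₀.norm_coe_le_norm x)
      simpa [sub_nonneg] using this
    have hneg1 : f (-1) < u := hneg (-1) fun x => by simp
    have hug₀ : u ≤ f g₀ := hu g₀ (subset_convexHull ℝ S hg₀)
    rw [map_neg] at hneg1
    nlinarith [norm_nonneg g₀]
  refine ⟨.mk₀ ((f 1)⁻¹ • (f : C(B, ℝ) →ₗ[ℝ] ℝ)) fun g hg => ?_, ?_, fun g hg => ?_⟩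
  · simpa using mul_nonneg (inv_nonneg.2 hf1.le) (hpos g hg)
  · change (f 1)⁻¹ • f 1 = 1
    simp [hf1.ne']
  · change 0 ≤ (f 1)⁻¹ • f g
    simpa using mul_nonneg (inv_nonneg.2 hf1.le) (hu0.trans (hu g (subset_convexHull ℝ S hg)))

end Domination

section Riesz

variable {B : Type*} [TopologicalSpace B] [CompactSpace B] [T2Space B] [MeasurableSpace B]
  [BorelSpace B]

open CompactlySupported CompactlySupportedContinuousMap in
theorem ContinuousMap.exists_isProbabilityMeasure_integral_eq (Λ : C(B, ℝ) →ₚ[ℝ] ℝ)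
    (hΛ : Λ 1 = 1) :
    ∃ μ : Measure B, IsProbabilityMeasure μ ∧ ∀ g : C(B, ℝ), ∫ x, g x ∂μ = Λ g := by
  let Λc : C_c(B, ℝ) →ₚ[ℝ] ℝ := .mk₀
    { toFun := fun g => Λ (continuousMapEquiv.symm g)
      map_add' := fun g h => map_add Λ (continuousMapEquiv.symm g) (continuousMapEquiv.symm h)
      map_smul' := fun r g => map_smul Λ r (continuousMapEquiv.symm g) }
    fun g hg => map_nonneg Λ (show 0 ≤ continuousMapEquiv.symm g from hg)
  have hint (g : C(B, ℝ)) : ∫ x, g x ∂(RealRMK.rieszMeasure Λc) = Λ g :=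
    RealRMK.integral_rieszMeasure Λc (continuousMapEquiv g)
  refine ⟨RealRMK.rieszMeasure Λc, ?_, hint⟩
  rw [isProbabilityMeasure_iff_real]
  simpa [hΛ] using hint 1

end Riesz

namespace FormBall

variable {n : ℕ} {X : Fin n → Type*} [∀ i, NormedAddCommGroup (X i)] [∀ i, NormedSpace ℝ (X i)]

def toFun (φ : FormBall X) : ((i : Fin n) → X i) → ℝ := fun u => φ.1 u

lemma isEmbedding_toFun : IsEmbedding (toFun (X := X)) :=
  ⟨⟨rfl⟩, fun _ _ h => Subtype.ext (ContinuousMultilinearMap.ext (congrFun h))⟩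

@[fun_prop]
lemma continuous_apply (u : (i : Fin n) → X i) : Continuous fun φ : FormBall X => φ.1 u :=
  (_root_.continuous_apply u).comp isEmbedding_toFun.continuous

instance : T2Space (FormBall X) := isEmbedding_toFun.t2Space

instance : Nonempty (FormBall X) := ⟨⟨0, by simp⟩⟩

instance : BorelSpace (FormBall X) := ⟨rfl⟩

lemma abs_apply_le (φ : FormBall X) (u : (i : Fin n) → X i) : |φ.1 u| ≤ ∏ i, ‖u i‖ :=
  (φ.1.le_opNorm u).trans (mul_le_of_le_one_left (by positivity) φ.2)

lemma range_toFun : range (toFun (X := X)) =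
    (univ.pi fun u => Icc (-∏ i, ‖u i‖) (∏ i, ‖u i‖)) ∩
      ({F | ∀ u i (x y : X i), F (Function.update u i (x + y)) =
          F (Function.update u i x) + F (Function.update u i y)} ∩
       {F | ∀ u i (r : ℝ) (x : X i), F (Function.update u i (r • x)) =
          r * F (Function.update u i x)}) := by
  apply Subset.antisymm
  · rintro _ ⟨φ, rfl⟩
    exact ⟨fun u _ => abs_le.1 (abs_apply_le φ u), φ.1.map_update_add, φ.1.map_update_smul⟩
  · rintro F ⟨hbound, hadd, hsmul⟩
    let f : MultilinearMap ℝ X ℝ :=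
      { toFun := F
        map_update_add' := fun u i x y => by convert hadd u i x y
        map_update_smul' := fun u i r x => by rw [smul_eq_mul]; convert hsmul u i r x }
    have hf : ∀ u, ‖f u‖ ≤ 1 * ∏ i, ‖u i‖ := fun u => by
      rw [one_mul, Real.norm_eq_abs, abs_le]
      exact hbound u (mem_univ u)
    exact ⟨⟨f.mkContinuous 1 hf, f.mkContinuous_norm_le zero_le_one hf⟩, rfl⟩

instance : CompactSpace (FormBall X) := by
  rw [← isCompact_univ_iff, isEmbedding_toFun.isCompact_iff, image_univ, range_toFun]
  refine (isCompact_univ_pi fun u => isCompact_Icc).inter_right (IsClosed.inter ?_ ?_)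
  all_goals
    simp only [ofPred_forall]
    exact isClosed_iInter fun _ => isClosed_iInter fun _ => isClosed_iInter fun _ =>
      isClosed_iInter fun _ => isClosed_eq (by fun_prop) (by fun_prop)

section Lp

variable (μ : Measure (FormBall X)) [IsFiniteMeasure μ]

lemma memLp_apply (q : ℝ≥0∞) (u : (i : Fin n) → X i) : MemLp (fun φ : FormBall X => φ.1 u) q μ :=
  .of_bound (continuous_apply u).aestronglyMeasurable (∏ i, ‖u i‖)
    (.of_forall fun φ => (Real.norm_eq_abs _).trans_le (abs_apply_le φ u))

def evalLp (p : ℝ) (u : (i : Fin n) → X i) : Lp ℝ (ENNReal.ofReal p) μ :=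
  (memLp_apply μ _ u).toLp

lemma evalLp_ae_eq (p : ℝ) (u : (i : Fin n) → X i) :
    ⇑(evalLp μ p u) =ᵐ[μ] fun φ : FormBall X => φ.1 u :=
  (memLp_apply μ _ u).coeFn_toLp

lemma norm_evalLp_sub {p : ℝ} (hp : 0 < p) (u v : (i : Fin n) → X i) :
    ‖evalLp μ p u - evalLp μ p v‖ = (∫ φ, |φ.1 u - φ.1 v| ^ p ∂μ) ^ p⁻¹ := by
  have hmem := (memLp_apply μ (ENNReal.ofReal p) u).sub (memLp_apply μ _ v)
  rw [evalLp, evalLp, ← MemLp.toLp_sub, Lp.norm_toLp,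
    hmem.eLpNorm_eq_integral_rpow_norm (by simpa using hp) ENNReal.ofReal_ne_top,
    ENNReal.toReal_ofReal (by positivity), ENNReal.toReal_ofReal hp.le]
  simp only [Pi.sub_apply, Real.norm_eq_abs]

end Lp

end FormBall

namespace DualBall

variable {Y : Type*} [NormedAddCommGroup Y] [NormedSpace ℝ Y]

lemma abs_apply_le (f : DualBall Y) (y : Y) : |f.1 y| ≤ ‖y‖ :=
  (f.1.le_opNorm y).trans (mul_le_of_le_one_left (norm_nonneg _) f.2)

def eval (y : Y) : lp (fun _ : DualBall Y => ℝ) ⊤ :=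
  ⟨fun f => f.1 y, memℓp_infty ⟨‖y‖, by rintro _ ⟨f, rfl⟩; exact abs_apply_le f y⟩⟩

lemma norm_eval_sub_le (y z : Y) : ‖eval y - eval z‖ ≤ ‖y - z‖ :=
  lp.norm_le_of_forall_le (norm_nonneg _) fun f => by
    change |f.1 y - f.1 z| ≤ ‖y - z‖
    exact map_sub f.1 y z ▸ abs_apply_le f (y - z)

theorem exists_lipschitz_factorization {α E : Type*} [SeminormedAddCommGroup E] (g : α → E)
    (F : α → Y) {c : ℝ} (hc : 0 ≤ c) (hF : ∀ a b, ‖F a - F b‖ ≤ c * ‖g a - g b‖) :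
    ∃ H : E → lp (fun _ : DualBall Y => ℝ) ⊤,
      (∀ e₁ e₂, ‖H e₁ - H e₂‖ ≤ c * ‖e₁ - e₂‖) ∧ ∀ a (f : DualBall Y), H (g a) f = f.1 (F a) := by
  have hfac : Function.FactorsThrough (eval ∘ F) g := fun a b hab => by
    have := hF a b
    rw [hab, sub_self, norm_zero, mul_zero, norm_le_zero_iff, sub_eq_zero] at this
    simp [this]
  have hlip : LipschitzOnWith c.toNNReal (Function.extend g (eval ∘ F) 0) (range g) := by
    refine LipschitzOnWith.of_dist_le' ?_
    rintro _ ⟨a, rfl⟩ _ ⟨b, rfl⟩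
    rw [hfac.extend_apply, hfac.extend_apply, dist_eq_norm, dist_eq_norm]
    exact (norm_eval_sub_le _ _).trans (hF a b)
  obtain ⟨H, hH, hHg⟩ := hlip.extend_lp_infty
  refine ⟨H, fun e₁ e₂ => ?_, fun a f => ?_⟩
  · simpa [dist_eq_norm, Real.coe_toNNReal _ hc] using hH.dist_le_mul e₁ e₂
  · rw [← hHg (mem_range_self a), hfac.extend_apply]
    rfl

end DualBall

section Summing

variable {n : ℕ} {X : Fin n → Type*} [∀ i, NormedAddCommGroup (X i)] [∀ i, NormedSpace ℝ (X i)]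
  {Y : Type*} [NormedAddCommGroup Y] [NormedSpace ℝ Y] {p c : ℝ}

lemma ContinuousMultilinearMap.norm_sub_rpow_update_smul {F : Type*} [NormedAddCommGroup F]
    [NormedSpace ℝ F] (M : ContinuousMultilinearMap ℝ X F) (hp : p ≠ 0) (i : Fin n) {a : ℝ}
    (ha : 0 ≤ a) (u v : (i : Fin n) → X i) :
    ‖M (Function.update u i (a ^ p⁻¹ • u i)) - M (Function.update v i (a ^ p⁻¹ • v i))‖ ^ p =
      a * ‖M u - M v‖ ^ p := by
  have ha' : 0 ≤ a ^ p⁻¹ := Real.rpow_nonneg ha _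
  rw [M.map_update_smul, M.map_update_smul, Function.update_eq_self, Function.update_eq_self,
    ← smul_sub, norm_smul, Real.norm_of_nonneg ha', Real.mul_rpow ha' (norm_nonneg _),
    Real.rpow_inv_rpow ha hp]

namespace LipschitzPSumming

variable {T : ContinuousMultilinearMap ℝ X Y}

lemma exists_sum_rpow_le (hT : LipschitzPSumming p c T) (hp : 0 < p) (hc : 0 ≤ c) {ι : Type*}
    [Fintype ι] (u v : ι → (i : Fin n) → X i) :
    ∃ φ : FormBall X, ∑ i, ‖T (u i) - T (v i)‖ ^ p ≤ c ^ p * ∑ i, |φ.1 (u i) - φ.1 (v i)| ^ p := by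
  set S : FormBall X → ℝ := fun φ => ∑ i, |φ.1 (u i) - φ.1 (v i)| ^ p
  obtain ⟨φ₀, -, hφ₀⟩ := isCompact_univ.exists_isMaxOn univ_nonempty
    (f := S) (Continuous.continuousOn (by fun_prop (disch := exact hp.le)))
  refine ⟨φ₀, ?_⟩
  let e := (Fintype.equivFin ι).symm
  have h := hT _ (u ∘ e) (v ∘ e)
  have hsup : (⨆ φ : FormBall X, (∑ j, |φ.1 (u (e j)) - φ.1 (v (e j))| ^ p) ^ (1 / p)) ≤
      S φ₀ ^ (1 / p) :=
    ciSup_le fun φ => by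
      rw [e.sum_comp (fun i => |φ.1 (u i) - φ.1 (v i)| ^ p)]
      exact Real.rpow_le_rpow (by positivity) (hφ₀ (mem_univ φ)) (by positivity)
  rw [Function.comp_def, Function.comp_def, e.sum_comp (fun i => ‖T (u i) - T (v i)‖ ^ p)] at h
  have := h.trans (mul_le_mul_of_nonneg_left hsup hc)
  rw [← Real.rpow_le_rpow_iff (by positivity) (by positivity) (one_div_pos.2 hp),
    Real.mul_rpow (by positivity) (by positivity), one_div, Real.rpow_rpow_inv hc hp.ne']
  simpa only [one_div] using this

lemma exists_weighted_sum_rpow_le (hT : LipschitzPSumming p c T) (hp : 0 < p) (hc : 0 ≤ c)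
    {ι : Type*} [Fintype ι] (w : ι → ℝ) (hw : ∀ i, 0 ≤ w i) (u v : ι → (i : Fin n) → X i) :
    ∃ φ : FormBall X, ∑ i, w i * ‖T (u i) - T (v i)‖ ^ p ≤
      c ^ p * ∑ i, w i * |φ.1 (u i) - φ.1 (v i)| ^ p := by
  rcases Nat.eq_zero_or_pos n with rfl | hn
  · refine ⟨Classical.arbitrary _, ?_⟩
    have huv : ∀ i, u i = v i := fun i => Subsingleton.elim _ _
    simp [huv, Real.zero_rpow hp.ne']
  · let scale (x : ι → (i : Fin n) → X i) (i : ι) :=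
      Function.update (x i) ⟨0, hn⟩ (w i ^ p⁻¹ • x i ⟨0, hn⟩)
    obtain ⟨φ, hφ⟩ := hT.exists_sum_rpow_le hp hc (scale u) (scale v)
    refine ⟨φ, ?_⟩
    simpa only [scale, T.norm_sub_rpow_update_smul hp.ne' _ (hw _), ← Real.norm_eq_abs,
      φ.1.norm_sub_rpow_update_smul hp.ne' _ (hw _)] using hφ

theorem exists_isProbabilityMeasure_le_integral (hT : LipschitzPSumming p c T) (hp : 0 < p)
    (hc : 0 ≤ c) :
    ∃ μ : Measure (FormBall X), IsProbabilityMeasure μ ∧ ∀ u v : (i : Fin n) → X i,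
      ‖T u - T v‖ ^ p ≤ c ^ p * ∫ φ, |φ.1 u - φ.1 v| ^ p ∂μ := by
  let G (q : ((i : Fin n) → X i) × ((i : Fin n) → X i)) : C(FormBall X, ℝ) :=
    ⟨fun φ => c ^ p * |φ.1 q.1 - φ.1 q.2| ^ p - ‖T q.1 - T q.2‖ ^ p,
      by fun_prop (disch := exact hp.le)⟩
  have hG : ∀ h ∈ convexHull ℝ (range G), ∃ φ, 0 ≤ h φ := by
    intro h hh
    obtain ⟨ι, _, w, z, hw, hw1, hz, rfl⟩ := mem_convexHull_iff_exists_fintype.1 hh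
    choose q hq using hz
    obtain ⟨φ, hφ⟩ :=
      hT.exists_weighted_sum_rpow_le hp hc w hw (fun i => (q i).1) (fun i => (q i).2)
    refine ⟨φ, ?_⟩
    simp only [← hq, ContinuousMap.coe_sum, ContinuousMap.coe_smul, Finset.sum_apply, Pi.smul_apply,
      ContinuousMap.coe_mk, G, smul_eq_mul, mul_sub, Finset.sum_sub_distrib]
    rw [sub_nonneg]
    rw [Finset.mul_sum] at hφ
    exact hφ.trans_eq (Finset.sum_congr rfl fun i _ => mul_left_comm _ _ _)
  obtain ⟨Λ, hΛ1, hΛG⟩ :=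
    ContinuousMap.exists_positiveLinearMap_of_forall_exists_nonneg ⟨G (0, 0), mem_range_self _⟩ hG
  obtain ⟨μ, hμ, hint⟩ := ContinuousMap.exists_isProbabilityMeasure_integral_eq Λ hΛ1
  refine ⟨μ, hμ, fun u v => ?_⟩
  have h := hint (G (u, v)) ▸ hΛG _ ⟨(u, v), rfl⟩
  have hcont : Continuous fun φ : FormBall X => |φ.1 u - φ.1 v| ^ p := by
    fun_prop (disch := exact hp.le)
  have hcont_int :=
    hcont.integrable_of_hasCompactSupport (HasCompactSupport.of_compactSpace _) (μ := μ)
  rwa [ContinuousMap.coe_mk, integral_sub (hcont_int.const_mul _) (integrable_const _),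
    integral_const_mul, integral_const, probReal_univ, one_smul, sub_nonneg] at h

theorem exists_isProbabilityMeasure_norm_sub_le (hT : LipschitzPSumming p c T) (hp : 0 < p)
    (hc : 0 ≤ c) :
    ∃ μ : Measure (FormBall X), ∃ _ : IsProbabilityMeasure μ, ∀ u v : (i : Fin n) → X i,
      ‖T u - T v‖ ≤ c * ‖FormBall.evalLp μ p u - FormBall.evalLp μ p v‖ := by
  obtain ⟨μ, hμ, hdom⟩ := hT.exists_isProbabilityMeasure_le_integral hp hc
  refine ⟨μ, hμ, fun u v => ?_⟩
  have hI : 0 ≤ ∫ φ, |φ.1 u - φ.1 v| ^ p ∂μ := integral_nonneg fun φ => by positivity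
  rw [FormBall.norm_evalLp_sub μ hp, ← Real.rpow_le_rpow_iff (norm_nonneg _) (by positivity) hp,
    Real.mul_rpow hc (by positivity), Real.rpow_inv_rpow hI hp.ne']
  exact hdom u v

end LipschitzPSumming

end Summing

theorem lipschitzPSumming_factorization_general {n : ℕ} {X : Fin n → Type*}
    [∀ i, NormedAddCommGroup (X i)] [∀ i, NormedSpace ℝ (X i)]
    {Y : Type*} [NormedAddCommGroup Y] [NormedSpace ℝ Y]
    (p : ℝ) (hp : 1 ≤ p) (c : ℝ) (hc : 0 ≤ c) (T : ContinuousMultilinearMap ℝ X Y)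
    (hT : LipschitzPSumming p c T) :
    ∃ (μ : Measure (FormBall X)) (_ : IsProbabilityMeasure μ)
      (g : ((i : Fin n) → X i) → Lp ℝ (ENNReal.ofReal p) μ)
      (htilde : Lp ℝ (ENNReal.ofReal p) μ → lp (fun _ : DualBall Y => ℝ) ⊤),
        (∀ u : (i : Fin n) → X i, ⇑(g u) =ᵐ[μ] fun φ : FormBall X => φ.1 u) ∧
        (∀ f₁ f₂ : Lp ℝ (ENNReal.ofReal p) μ, ‖htilde f₁ - htilde f₂‖ ≤ c * ‖f₁ - f₂‖) ∧
        (∀ (u : (i : Fin n) → X i) (y : DualBall Y), htilde (g u) y = y.1 (T u)) := by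
  have : Fact (1 ≤ ENNReal.ofReal p) := ⟨ENNReal.one_le_ofReal.2 hp⟩
  obtain ⟨μ, hμ, hdom⟩ := hT.exists_isProbabilityMeasure_norm_sub_le (by linarith) hc
  obtain ⟨H, hH, hHg⟩ := DualBall.exists_lipschitz_factorization _ T hc hdom
  exact ⟨μ, hμ, FormBall.evalLp μ p, H, FormBall.evalLp_ae_eq μ p, hH, hHg⟩

/-- Pietsch factorization: a Lipschitz `p`-summing multilinear operator `T` (with
constant `c`) factors as `i_Y ∘ T = h̃ ∘ j_p ∘ ⊗`: there are a Borel probability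
measure `μ` on the weak-* unit ball of `n`-linear forms, a `c`-Lipschitz map
`h̃ : L_p(μ) → ℓ∞(B_{Y*})`, and `g : X₁ × ⋯ × Xₙ → L_p(μ)` with `g(u)` the class of
`φ ↦ φ(u)`, such that `h̃(g(u))` is the function `y* ↦ y*(T(u))`. -/
theorem lipschitzPSumming_factorization {n : ℕ} {X : Fin n → Type*}
    [∀ i, NormedAddCommGroup (X i)] [∀ i, NormedSpace ℝ (X i)] [∀ i, CompleteSpace (X i)]
    {Y : Type*} [NormedAddCommGroup Y] [NormedSpace ℝ Y] [CompleteSpace Y]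
    (p : ℝ) (hp : 1 ≤ p) (c : ℝ) (hc : 0 ≤ c) (T : ContinuousMultilinearMap ℝ X Y)
    (hT : LipschitzPSumming p c T) :
    ∃ (μ : Measure (FormBall X)) (_ : IsProbabilityMeasure μ)
      (g : ((i : Fin n) → X i) → Lp ℝ (ENNReal.ofReal p) μ)
      (htilde : Lp ℝ (ENNReal.ofReal p) μ → lp (fun _ : DualBall Y => ℝ) ⊤),
        (∀ u : (i : Fin n) → X i, ⇑(g u) =ᵐ[μ] fun φ : FormBall X => φ.1 u) ∧
        (∀ f₁ f₂ : Lp ℝ (ENNReal.ofReal p) μ, ‖htilde f₁ - htilde f₂‖ ≤ c * ‖f₁ - f₂‖) ∧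
        (∀ (u : (i : Fin n) → X i) (y : DualBall Y), htilde (g u) y = y.1 (T u)) :=
  lipschitzPSumming_factorization_general p hp c hc T hT
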